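/- Suppose that for every time t ∈ ℕ the iterate satisfies θ_{t+1} = proj_Θ(θ_t − α_t g_t) with θ_0 ∈ Θ, where ∇J_t(θ_t) = c · g_t for a fixed constant c > 0 and ‖g_t‖ ≤ G, the step sizes are α_0 = 1 and α_t = t^{−μ_1} for t ≥ 1 with μ_1 ∈ (0,1) and μ_1 < μ_2, and the minimizer drift satisfies ‖θ*_{t+1} − θ*_t‖ ≤ M_0 t^{−μ_2} for all t > τ. Then there exist M > 0 and T_0 ∈ ℕ such that for all t_f ≥ T_0 the regret satisfies ∑_{t=0}^{t_f} (J_t(θ_t) − J_t(θ*_t)) ≤ M · t_f^{μ*}, where μ* = max{μ_1, 1 − μ_1, 1 + μ_1 − μ_2}. -/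

import Mathlib

open Real

lemma aux_rpow_diff {s : ℝ} (hs0 : 0 ≤ s) (hs1 : s < 1) (n : ℕ) :
    (1 - s) * ((n : ℝ) + 1) ^ (-s) ≤ ((n : ℝ) + 1) ^ (1 - s) - (n : ℝ) ^ (1 - s) := by
  rcases Nat.eq_zero_or_pos n with h | h
  · subst h
    simp only [Nat.cast_zero, zero_add, Real.one_rpow,
      Real.zero_rpow (by linarith : (1:ℝ) - s ≠ 0)]
    linarith
  · have hn1 : (1 : ℝ) ≤ (n : ℝ) := by exact_mod_cast h
    have hlt : (n : ℝ) < (n : ℝ) + 1 := by linarith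
    have hcont : ContinuousOn (fun x : ℝ => x ^ (1 - s)) (Set.Icc (n : ℝ) ((n : ℝ) + 1)) := by
      intro x hx
      exact (Real.continuousAt_rpow_const x (1 - s)
        (Or.inl (by rcases hx with ⟨h1, _⟩; intro h0; rw [h0] at h1; linarith))).continuousWithinAt
    have hderiv : ∀ x ∈ Set.Ioo (n : ℝ) ((n : ℝ) + 1),
        HasDerivAt (fun x : ℝ => x ^ (1 - s)) ((1 - s) * x ^ (-s)) x := by
      intro x hx
      have hx0 : x ≠ 0 := by rcases hx with ⟨h1, _⟩; intro h0; rw [h0] at h1; linarith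
      have := Real.hasDerivAt_rpow_const (x := x) (p := 1 - s) (Or.inl hx0)
      simpa [show (1 : ℝ) - s - 1 = -s by ring] using this
    obtain ⟨ξ, hξ, heq⟩ := exists_hasDerivAt_eq_slope (fun x : ℝ => x ^ (1 - s))
      (fun x => (1 - s) * x ^ (-s)) hlt hcont hderiv
    have hξpos : 0 < ξ := lt_of_lt_of_le (by linarith) hξ.1.le
    have hmono : ((n : ℝ) + 1) ^ (-s) ≤ ξ ^ (-s) :=
      Real.rpow_le_rpow_of_nonpos hξpos hξ.2.le (neg_nonpos.mpr hs0)
    have : (1 - s) * ((n : ℝ) + 1) ^ (-s) ≤ (1 - s) * ξ ^ (-s) :=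
      mul_le_mul_of_nonneg_left hmono (by linarith)
    rw [heq] at this
    calc (1 - s) * ((n : ℝ) + 1) ^ (-s)
        ≤ (((n : ℝ) + 1) ^ (1 - s) - (n : ℝ) ^ (1 - s)) / ((n : ℝ) + 1 - n) := this
      _ = ((n : ℝ) + 1) ^ (1 - s) - (n : ℝ) ^ (1 - s) := by
          rw [show (n : ℝ) + 1 - n = 1 by ring, div_one]

lemma aux_sum_rpow {s : ℝ} (hs0 : 0 ≤ s) (hs1 : s < 1) (n : ℕ) :
    ∑ i ∈ Finset.range n, ((i : ℝ) + 1) ^ (-s) ≤ (n : ℝ) ^ (1 - s) / (1 - s) := by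
  have h1s : (0 : ℝ) < 1 - s := by linarith
  induction n with
  | zero => simp [Real.zero_rpow (by linarith : (1:ℝ) - s ≠ 0)]
  | succ n ih =>
    rw [Finset.sum_range_succ]
    have h2 : ((n : ℝ) + 1) ^ (-s) ≤ (((n : ℝ) + 1) ^ (1 - s) - (n : ℝ) ^ (1 - s)) / (1 - s) := by
      rw [le_div_iff₀ h1s]
      have := aux_rpow_diff hs0 hs1 n
      linarith [this]
    rw [sub_div] at h2
    push_cast
    linarith

lemma aux_abel (b x : ℕ → ℝ) (C : ℝ) (hb : ∀ t, b t ≤ b (t + 1)) (hbnn : ∀ t, 0 ≤ b t)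
    (hx0 : ∀ t, 0 ≤ x t) (hxC : ∀ t, x t ≤ C) (n : ℕ) :
    ∑ t ∈ Finset.range (n + 1), b t * (x t - x (t + 1)) ≤ b n * C := by
  have key : ∀ n, ∑ t ∈ Finset.range (n + 1), b t * (x t - x (t + 1)) ≤
      b n * C - b n * x (n + 1) := by
    intro n
    induction n with
    | zero => rw [Finset.range_one, Finset.sum_singleton]
              nlinarith [hxC 0, hbnn 0, hx0 1]
    | succ n ih =>
      rw [Finset.sum_range_succ]
      nlinarith [hb n, hxC (n + 1), hx0 (n + 1), hbnn (n + 1), hbnn n]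
  have := key n
  nlinarith [hx0 (n + 1), hbnn n]

open Real RealInnerProductSpace

lemma aux_grad_ineq {E : Type*} [NormedAddCommGroup E] [InnerProductSpace ℝ E] [CompleteSpace E]
    {f : E → ℝ} (hconv : ConvexOn ℝ Set.univ f) (hdiff : Differentiable ℝ f) (x y : E) :
    f x - f y ≤ ⟪gradient f x, x - y⟫ := by
  have hg : HasGradientAt f (gradient f x) x := (hdiff x).hasGradientAt
  have hfd : HasFDerivAt f (InnerProductSpace.toDual ℝ E (gradient f x)) x := hg.hasFDerivAt
  set A : ℝ →ᵃ[ℝ] E := AffineMap.lineMap x y with hA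
  have hφconv : ConvexOn ℝ Set.univ (f ∘ A) := by
    simpa using hconv.comp_affineMap A
  have hA0 : A 0 = x := AffineMap.lineMap_apply_zero x y
  have hA1 : A 1 = y := AffineMap.lineMap_apply_one x y
  have hlin : HasDerivAt (fun r : ℝ => A r) (y - x) 0 := by
    have : HasDerivAt (fun r : ℝ => r • (y - x) + x) ((1 : ℝ) • (y - x)) 0 :=
      ((hasDerivAt_id (0 : ℝ)).smul_const (y - x)).add_const x
    simpa [hA, AffineMap.lineMap_apply, vsub_eq_sub, vadd_eq_add, one_smul] using this
  have hd : HasDerivAt (f ∘ A) (⟪gradient f x, y - x⟫) 0 := by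
    have hfd' : HasFDerivAt f (InnerProductSpace.toDual ℝ E (gradient f x)) (A 0) := by
      rw [hA0]; exact hfd
    have := hfd'.comp_hasDerivAt 0 hlin
    simpa [InnerProductSpace.toDual_apply_apply] using this
  have hslope := hφconv.le_slope_of_hasDerivAt (Set.mem_univ (0:ℝ)) (Set.mem_univ (1:ℝ))
    zero_lt_one hd
  have hs : slope (f ∘ A) 0 1 = f y - f x := by
    simp [slope, hA0, hA1]
  rw [hs] at hslope
  have : ⟪gradient f x, x - y⟫ = -⟪gradient f x, y - x⟫ := by
    rw [← inner_neg_right, neg_sub]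
  linarith [hslope, this.ge, this.le]

lemma aux_proj {E : Type*} [NormedAddCommGroup E] [InnerProductSpace ℝ E]
    {Θ : Set E} (hconv : Convex ℝ Θ)
    (proj : E → E) (hproj : ∀ x, proj x ∈ Θ ∧ ∀ y ∈ Θ, dist x (proj x) ≤ dist x y)
    (x u : E) (hu : u ∈ Θ) : ‖proj x - u‖ ≤ ‖x - u‖ := by
  have hInf : ‖x - proj x‖ = ⨅ w : Θ, ‖x - w‖ := by
    have hne : Nonempty Θ := ⟨⟨proj x, (hproj x).1⟩⟩
    apply le_antisymm
    · exact le_ciInf fun w => by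
        simpa [dist_eq_norm] using (hproj x).2 w w.2
    · have hbdd : BddBelow (Set.range fun w : Θ => ‖x - (w : E)‖) :=
        ⟨0, by rintro r ⟨w, rfl⟩; exact norm_nonneg _⟩
      exact ciInf_le hbdd ⟨proj x, (hproj x).1⟩
  have hkey := (norm_eq_iInf_iff_real_inner_le_zero hconv (hproj x).1).1 hInf u hu
  have hexp : ‖x - u‖ ^ 2 =
      ‖x - proj x‖ ^ 2 + 2 * ⟪x - proj x, proj x - u⟫ + ‖proj x - u‖ ^ 2 := by
    have h : x - u = (x - proj x) + (proj x - u) := by abel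
    rw [h, norm_add_sq_real]
  have h2 : ⟪x - proj x, proj x - u⟫ = -⟪x - proj x, u - proj x⟫ := by
    rw [← inner_neg_right, neg_sub]
  have hsq : ‖proj x - u‖ ^ 2 ≤ ‖x - u‖ ^ 2 := by nlinarith [sq_nonneg ‖x - proj x‖]
  exact le_of_pow_le_pow_left₀ two_ne_zero (norm_nonneg _) hsq

open Real RealInnerProductSpace


set_option maxHeartbeats 2000000 in
/-- Regret bound for online projected gradient descent with a
fixed gradient scaling `c` and drifting minimizers. -/
theorem regret_bound_online_gradient_descent_const_scaling {m : ℕ}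
    (Θ : Set (EuclideanSpace ℝ (Fin m)))
    (hne : Θ.Nonempty) (hcl : IsClosed Θ) (hconv : Convex ℝ Θ)
    (hbd : Bornology.IsBounded Θ)
    (proj : EuclideanSpace ℝ (Fin m) → EuclideanSpace ℝ (Fin m))
    (hproj : ∀ x, proj x ∈ Θ ∧ ∀ y ∈ Θ, dist x (proj x) ≤ dist x y)
    (J : ℕ → EuclideanSpace ℝ (Fin m) → ℝ)
    (hJconv : ∀ t, ConvexOn ℝ Set.univ (J t))
    (hJdiff : ∀ t, Differentiable ℝ (J t))
    (θstar : ℕ → EuclideanSpace ℝ (Fin m))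
    (hθstar : ∀ t, θstar t ∈ Θ ∧ ∀ y ∈ Θ, J t (θstar t) ≤ J t y)
    (c G M₀ : ℝ) (τ : ℕ) (μ₁ μ₂ : ℝ)
    (hcpos : 0 < c) (hG : 0 < G) (hM₀ : 0 < M₀)
    (hμ₁ : μ₁ ∈ Set.Ioo (0:ℝ) 1) (hμ₁₂ : μ₁ < μ₂)
    (θ g : ℕ → EuclideanSpace ℝ (Fin m)) (α : ℕ → ℝ)
    (hα0 : α 0 = 1) (hα : ∀ t : ℕ, 1 ≤ t → α t = (t:ℝ) ^ (-μ₁))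
    (hθ0 : θ 0 ∈ Θ)
    (hstep : ∀ t : ℕ, θ (t+1) = proj (θ t - α t • g t))
    (hgrad : ∀ t : ℕ, gradient (J t) (θ t) = c • g t)
    (hgbd : ∀ t : ℕ, ‖g t‖ ≤ G)
    (hdrift : ∀ t : ℕ, τ < t → ‖θstar (t+1) - θstar t‖ ≤ M₀ * (t:ℝ) ^ (-μ₂)) :
    ∃ M > (0:ℝ), ∃ T₀ : ℕ, ∀ tf : ℕ, T₀ ≤ tf →
      ∑ t ∈ Finset.range (tf+1), (J t (θ t) - J t (θstar t)) ≤
        M * (tf:ℝ) ^ (max μ₁ (max (1 - μ₁) (1 + μ₁ - μ₂))) := by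
  obtain ⟨hμ₁0, hμ₁1⟩ := hμ₁
  set μs := max μ₁ (max (1 - μ₁) (1 + μ₁ - μ₂)) with hμs
  -- diameter bound
  obtain ⟨C, hC⟩ := Metric.isBounded_iff.1 hbd
  set D := max C 0 with hDdef
  have hD0 : (0:ℝ) ≤ D := le_max_right _ _
  have hdistD : ∀ u ∈ Θ, ∀ v ∈ Θ, ‖u - v‖ ≤ D := fun u hu v hv => by
    rw [← dist_eq_norm]; exact le_trans (hC hu hv) (le_max_left _ _)
  -- iterates stay in Θ
  have hθmem : ∀ t, θ t ∈ Θ := by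
    intro t
    induction t with
    | zero => exact hθ0
    | succ n _ => rw [hstep]; exact (hproj _).1
  -- step sizes
  have hαpos : ∀ t, 0 < α t := by
    intro t
    rcases Nat.eq_zero_or_pos t with h | h
    · rw [h, hα0]; norm_num
    · rw [hα t h]
      exact Real.rpow_pos_of_pos (by exact_mod_cast h) _
  set β : ℕ → ℝ := fun t => (α t)⁻¹ with hβdef
  have hβpos : ∀ t, 0 < β t := fun t => inv_pos.2 (hαpos t)
  have hβval : ∀ t : ℕ, 1 ≤ t → β t = (t:ℝ) ^ μ₁ := by
    intro t ht
    simp only [hβdef]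
    rw [hα t ht, Real.rpow_neg (by positivity), inv_inv]
  have hβz : β 0 = 1 := by simp [hβdef, hα0]
  have hβmono : ∀ t, β t ≤ β (t + 1) := by
    intro t
    rcases Nat.eq_zero_or_pos t with h | h
    · subst h
      rw [hβz, hβval 1 le_rfl]
      simp
    · rw [hβval t h, hβval (t+1) (by omega)]
      exact Real.rpow_le_rpow (by positivity) (by push_cast; linarith) hμ₁0.le
  -- abbreviations
  set X : ℕ → ℝ := fun t => ‖θ t - θstar t‖ ^ 2 with hXdef
  set d : ℕ → ℝ := fun t => ‖θstar (t+1) - θstar t‖ with hddef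
  have hXD : ∀ t, X t ≤ D ^ 2 := fun t =>
    pow_le_pow_left₀ (norm_nonneg _) (hdistD _ (hθmem t) _ (hθstar t).1) 2
  have hX0 : ∀ t, 0 ≤ X t := fun t => sq_nonneg _
  have hdD : ∀ t, d t ≤ D := fun t => hdistD _ (hθstar (t+1)).1 _ (hθstar t).1
  have hd0 : ∀ t, 0 ≤ d t := fun t => norm_nonneg _
  -- per-step bound
  have key : ∀ t, J t (θ t) - J t (θstar t) ≤
      c * (β t * (X t - X (t+1)) / 2 + 3 * D * (β t * d t) / 2 + α t * (G ^ 2 / 2)) := by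
    intro t
    have h1 : J t (θ t) - J t (θstar t) ≤ c * ⟪g t, θ t - θstar t⟫ := by
      have h := aux_grad_ineq (hJconv t) (hJdiff t) (θ t) (θstar t)
      rwa [hgrad t, real_inner_smul_left] at h
    have h2 : ‖θ (t+1) - θstar t‖ ≤ ‖θ t - α t • g t - θstar t‖ := by
      rw [hstep t]; exact aux_proj hconv proj hproj _ _ (hθstar t).1
    have hns : ‖α t • g t‖ ^ 2 = α t ^ 2 * ‖g t‖ ^ 2 := by
      rw [norm_smul, mul_pow, Real.norm_eq_abs, sq_abs]
    have h3 : ‖θ t - α t • g t - θstar t‖ ^ 2 =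
        X t - 2 * (α t * ⟪θ t - θstar t, g t⟫) + α t ^ 2 * ‖g t‖ ^ 2 := by
      have hsub : θ t - α t • g t - θstar t = (θ t - θstar t) - α t • g t := by abel
      rw [hsub, norm_sub_sq_real, real_inner_smul_right, hns, hXdef]
    have hg2 : ‖g t‖ ^ 2 ≤ G ^ 2 := pow_le_pow_left₀ (norm_nonneg _) (hgbd t) 2
    have h4 : ‖θ (t+1) - θstar t‖ ^ 2 ≤
        X t - 2 * (α t * ⟪θ t - θstar t, g t⟫) + α t ^ 2 * G ^ 2 := by
      have hsq := pow_le_pow_left₀ (norm_nonneg _) h2 2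
      rw [h3] at hsq
      nlinarith [sq_nonneg (α t)]
    have h5 : X (t+1) ≤ ‖θ (t+1) - θstar t‖ ^ 2 + 3 * D * d t := by
      have htri : ‖θ (t+1) - θstar (t+1)‖ ≤ ‖θ (t+1) - θstar t‖ + d t := by
        have heq : θ (t+1) - θstar (t+1) = (θ (t+1) - θstar t) + (θstar t - θstar (t+1)) := by
          abel
        rw [heq]
        calc ‖(θ (t+1) - θstar t) + (θstar t - θstar (t+1))‖
            ≤ ‖θ (t+1) - θstar t‖ + ‖θstar t - θstar (t+1)‖ := norm_add_le _ _
          _ = ‖θ (t+1) - θstar t‖ + d t := by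
              rw [norm_sub_rev (θstar t) (θstar (t+1))]
      have hb : ‖θ (t+1) - θstar t‖ ≤ D := hdistD _ (hθmem _) _ (hθstar t).1
      have hsq := pow_le_pow_left₀ (norm_nonneg _) htri 2
      have hXeq : X (t+1) = ‖θ (t+1) - θstar (t+1)‖ ^ 2 := rfl
      nlinarith [hd0 t, hdD t, norm_nonneg (θ (t+1) - θstar t)]
    have hβα : β t * α t = 1 := inv_mul_cancel₀ (ne_of_gt (hαpos t))
    have hI : ⟪θ t - θstar t, g t⟫ = ⟪g t, θ t - θstar t⟫ := real_inner_comm _ _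
    have key2 : 2 * (α t * ⟪g t, θ t - θstar t⟫) ≤
        (X t - X (t+1)) + 3 * D * d t + α t ^ 2 * G ^ 2 := by
      rw [← hI]; nlinarith [h4, h5]
    have key3 := mul_le_mul_of_nonneg_left key2 (hβpos t).le
    have e1 : β t * (2 * (α t * ⟪g t, θ t - θstar t⟫)) = 2 * ⟪g t, θ t - θstar t⟫ := by
      have : β t * (2 * (α t * ⟪g t, θ t - θstar t⟫)) =
          2 * ((β t * α t) * ⟪g t, θ t - θstar t⟫) := by ring
      rw [this, hβα]; ring
    have e2 : β t * ((X t - X (t+1)) + 3 * D * d t + α t ^ 2 * G ^ 2) =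
        β t * (X t - X (t+1)) + 3 * D * (β t * d t) + (β t * α t) * (α t * G ^ 2) := by
      ring
    rw [e1, e2, hβα, one_mul] at key3
    have hinner : ⟪g t, θ t - θstar t⟫ ≤
        β t * (X t - X (t+1)) / 2 + 3 * D * (β t * d t) / 2 + α t * (G ^ 2 / 2) := by
      linarith
    calc J t (θ t) - J t (θstar t) ≤ c * ⟪g t, θ t - θstar t⟫ := h1
      _ ≤ _ := mul_le_mul_of_nonneg_left hinner hcpos.le
  -- constants
  set s₀ : ℝ := min (μ₂ - μ₁) (1 - μ₁) with hs₀def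
  have hs₀pos : 0 < s₀ := lt_min (by linarith) (by linarith)
  have hs₀lt1 : s₀ < 1 := lt_of_le_of_lt (min_le_right _ _) (by linarith)
  have h1s₀ : (0:ℝ) < 1 - s₀ := by linarith
  have hs₀μs : 1 - s₀ ≤ μs := by
    rcases le_total (μ₂ - μ₁) (1 - μ₁) with h | h
    · rw [hs₀def, min_eq_left h]
      calc (1:ℝ) - (μ₂ - μ₁) = 1 + μ₁ - μ₂ := by ring
        _ ≤ max (1 - μ₁) (1 + μ₁ - μ₂) := le_max_right _ _
        _ ≤ μs := le_max_right _ _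
    · rw [hs₀def, min_eq_right h]
      calc (1:ℝ) - (1 - μ₁) = μ₁ := by ring
        _ ≤ μs := le_max_left _ _
  set K₁ : ℝ := ((τ:ℝ) + 1) * (((τ:ℝ) + 1) * D) with hK₁def
  have hK₁0 : 0 ≤ K₁ := by positivity
  set M : ℝ := c * (D ^ 2 / 2 + 3 * D / 2 * (K₁ + M₀ / (1 - s₀)) +
      G ^ 2 / 2 * (1 + 1 / (1 - μ₁))) + 1 with hMdef
  have hMpos : 0 < M := by
    have h1 : (0:ℝ) ≤ D ^ 2 / 2 := by positivity
    have h2 : (0:ℝ) ≤ 3 * D / 2 * (K₁ + M₀ / (1 - s₀)) := by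
      apply mul_nonneg (by positivity)
      have : (0:ℝ) ≤ M₀ / (1 - s₀) := le_of_lt (div_pos hM₀ h1s₀)
      linarith
    have h3 : (0:ℝ) ≤ G ^ 2 / 2 * (1 + 1 / (1 - μ₁)) := by
      apply mul_nonneg (by positivity)
      have : (0:ℝ) ≤ 1 / (1 - μ₁) := le_of_lt (div_pos one_pos (by linarith))
      linarith
    have hS : (0:ℝ) ≤ D ^ 2 / 2 + 3 * D / 2 * (K₁ + M₀ / (1 - s₀)) +
        G ^ 2 / 2 * (1 + 1 / (1 - μ₁)) := by linarith
    have hcS := mul_nonneg hcpos.le hS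
    rw [hMdef]
    linarith
  refine ⟨M, hMpos, 1, ?_⟩
  intro tf htf
  have htf1 : (1:ℝ) ≤ (tf:ℝ) := by exact_mod_cast htf
  have htfpos : (0:ℝ) < (tf:ℝ) := by linarith
  set T : ℝ := (tf:ℝ) ^ μs with hTdef
  have hμs0 : 0 ≤ μs := le_trans hμ₁0.le (le_max_left _ _)
  have hT1 : (1:ℝ) ≤ T := by
    rw [hTdef, ← Real.rpow_zero (tf:ℝ)]
    exact Real.rpow_le_rpow_of_exponent_le htf1 hμs0
  have hT0 : (0:ℝ) ≤ T := by linarith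
  -- sum 1 : Abel
  have habel : ∑ t ∈ Finset.range (tf+1), β t * (X t - X (t+1)) ≤ β tf * D ^ 2 :=
    aux_abel β X (D ^ 2) hβmono (fun t => (hβpos t).le) hX0 hXD tf
  have hβtf : β tf ≤ T := by
    rw [hβval tf htf, hTdef]
    exact Real.rpow_le_rpow_of_exponent_le htf1 (le_max_left _ _)
  have hs1 : ∑ t ∈ Finset.range (tf+1), β t * (X t - X (t+1)) / 2 ≤ D ^ 2 / 2 * T := by
    rw [← Finset.sum_div]
    rw [div_le_iff₀ (by norm_num : (0:ℝ) < 2)]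
    calc ∑ t ∈ Finset.range (tf+1), β t * (X t - X (t+1)) ≤ β tf * D ^ 2 := habel
      _ ≤ T * D ^ 2 := mul_le_mul_of_nonneg_right hβtf (by positivity)
      _ = D ^ 2 / 2 * T * 2 := by ring
  -- sum 2 : drift
  set Q : ℕ → ℝ := fun t => if t ≤ τ then ((τ:ℝ) + 1) * D else 0 with hQdef
  set R : ℕ → ℝ := fun t => M₀ * (t:ℝ) ^ (-s₀) with hRdef
  have hQR : ∀ t, β t * d t ≤ Q t + R t := by
    intro t
    have hR0 : 0 ≤ R t := mul_nonneg hM₀.le (Real.rpow_nonneg (Nat.cast_nonneg t) _)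
    by_cases ht : t ≤ τ
    · have hβle : β t ≤ (τ:ℝ) + 1 := by
        rcases Nat.eq_zero_or_pos t with h | h
        · rw [h, hβz]
          have : (0:ℝ) ≤ (τ:ℝ) := Nat.cast_nonneg τ
          linarith
        · rw [hβval t h]
          calc (t:ℝ) ^ μ₁ ≤ (t:ℝ) ^ (1:ℝ) :=
              Real.rpow_le_rpow_of_exponent_le (by exact_mod_cast h) hμ₁1.le
            _ = (t:ℝ) := Real.rpow_one _
            _ ≤ (τ:ℝ) + 1 := by exact_mod_cast Nat.le_succ_of_le ht
      have : β t * d t ≤ ((τ:ℝ) + 1) * D :=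
        mul_le_mul hβle (hdD t) (hd0 t) (by positivity)
      simp only [hQdef, if_pos ht]
      linarith
    · push_neg at ht
      have ht1 : 1 ≤ t := by omega
      have htR : (1:ℝ) ≤ (t:ℝ) := by exact_mod_cast ht1
      have htpos : (0:ℝ) < (t:ℝ) := by linarith
      have hstep1 : β t * d t ≤ (t:ℝ) ^ μ₁ * (M₀ * (t:ℝ) ^ (-μ₂)) := by
        rw [hβval t ht1]
        exact mul_le_mul_of_nonneg_left (hdrift t ht) (Real.rpow_nonneg htpos.le _)
      have heq : (t:ℝ) ^ μ₁ * (M₀ * (t:ℝ) ^ (-μ₂)) = M₀ * (t:ℝ) ^ (μ₁ - μ₂) := by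
        rw [show μ₁ - μ₂ = μ₁ + -μ₂ by ring, Real.rpow_add htpos]
        ring
      have hle2 : (t:ℝ) ^ (μ₁ - μ₂) ≤ (t:ℝ) ^ (-s₀) :=
        Real.rpow_le_rpow_of_exponent_le htR (by
          have : s₀ ≤ μ₂ - μ₁ := min_le_left _ _
          linarith)
      simp only [hQdef, if_neg (by omega : ¬ t ≤ τ)]
      rw [zero_add, hRdef]
      calc β t * d t ≤ M₀ * (t:ℝ) ^ (μ₁ - μ₂) := by rw [← heq]; exact hstep1
        _ ≤ M₀ * (t:ℝ) ^ (-s₀) := mul_le_mul_of_nonneg_left hle2 hM₀.le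
  have hQsum : ∑ t ∈ Finset.range (tf+1), Q t ≤ K₁ := by
    have hfe : ∑ t ∈ Finset.range (tf+1), Q t =
        ∑ t ∈ (Finset.range (tf+1)).filter (fun t => t ≤ τ), (((τ:ℝ) + 1) * D) := by
      rw [Finset.sum_filter]
    rw [hfe, Finset.sum_const, nsmul_eq_mul]
    have hcard : ((Finset.range (tf+1)).filter (fun t => t ≤ τ)).card ≤ τ + 1 := by
      have hsub : (Finset.range (tf+1)).filter (fun t => t ≤ τ) ⊆ Finset.range (τ+1) := by
        intro t ht
        simp only [Finset.mem_filter, Finset.mem_range] at ht ⊢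
        omega
      calc _ ≤ (Finset.range (τ+1)).card := Finset.card_le_card hsub
        _ = τ + 1 := Finset.card_range _
    have : (((Finset.range (tf+1)).filter (fun t => t ≤ τ)).card : ℝ) ≤ (τ:ℝ) + 1 := by
      exact_mod_cast hcard
    rw [hK₁def]
    exact mul_le_mul_of_nonneg_right this (by positivity) |>.trans (le_of_eq rfl)
  have hRsum : ∑ t ∈ Finset.range (tf+1), R t ≤ M₀ * ((tf:ℝ) ^ (1 - s₀) / (1 - s₀)) := by
    rw [Finset.sum_range_succ']
    have hR0 : R 0 = 0 := by
      simp [hRdef, Real.zero_rpow (by linarith : -s₀ ≠ 0)]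
    rw [hR0, add_zero]
    have : ∑ i ∈ Finset.range tf, R (i+1) =
        M₀ * ∑ i ∈ Finset.range tf, ((i:ℝ) + 1) ^ (-s₀) := by
      rw [Finset.mul_sum]
      refine Finset.sum_congr rfl fun i _ => ?_
      simp only [hRdef]
      push_cast
      ring_nf
    rw [this]
    exact mul_le_mul_of_nonneg_left (aux_sum_rpow hs₀pos.le hs₀lt1 tf) hM₀.le
  have htfs₀ : (tf:ℝ) ^ (1 - s₀) ≤ T := by
    rw [hTdef]; exact Real.rpow_le_rpow_of_exponent_le htf1 hs₀μs
  have hs2 : ∑ t ∈ Finset.range (tf+1), 3 * D * (β t * d t) / 2 ≤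
      3 * D / 2 * (K₁ + M₀ / (1 - s₀)) * T := by
    have hsum : ∑ t ∈ Finset.range (tf+1), β t * d t ≤ K₁ + M₀ * ((tf:ℝ) ^ (1 - s₀) / (1 - s₀)) := by
      calc ∑ t ∈ Finset.range (tf+1), β t * d t
          ≤ ∑ t ∈ Finset.range (tf+1), (Q t + R t) := Finset.sum_le_sum fun t _ => hQR t
        _ = ∑ t ∈ Finset.range (tf+1), Q t + ∑ t ∈ Finset.range (tf+1), R t :=
            Finset.sum_add_distrib
        _ ≤ K₁ + M₀ * ((tf:ℝ) ^ (1 - s₀) / (1 - s₀)) := add_le_add hQsum hRsum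
    have hbd2 : K₁ + M₀ * ((tf:ℝ) ^ (1 - s₀) / (1 - s₀)) ≤ (K₁ + M₀ / (1 - s₀)) * T := by
      have e1 : K₁ ≤ K₁ * T := le_mul_of_one_le_right hK₁0 hT1
      have e2 : M₀ * ((tf:ℝ) ^ (1 - s₀) / (1 - s₀)) ≤ M₀ / (1 - s₀) * T := by
        rw [div_mul_eq_mul_div, mul_comm (M₀) ((tf:ℝ) ^ (1 - s₀) / (1 - s₀))]
        rw [div_mul_eq_mul_div, mul_comm ((tf:ℝ) ^ (1 - s₀)) M₀]
        apply div_le_div_of_nonneg_right ?_ h1s₀.le |>.trans_eq rfl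
        exact mul_le_mul_of_nonneg_left htfs₀ hM₀.le
      linarith [e1, e2]
      -- goal : ... ≤ (K₁ + M₀/(1-s₀)) * T ; note RHS = K₁*T + (M₀/(1-s₀))*T
    have hsum2 : ∑ t ∈ Finset.range (tf+1), 3 * D * (β t * d t) / 2 =
        3 * D / 2 * ∑ t ∈ Finset.range (tf+1), β t * d t := by
      rw [Finset.mul_sum]
      exact Finset.sum_congr rfl fun t _ => by ring
    rw [hsum2]
    calc 3 * D / 2 * ∑ t ∈ Finset.range (tf+1), β t * d t
        ≤ 3 * D / 2 * ((K₁ + M₀ / (1 - s₀)) * T) := by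
          apply mul_le_mul_of_nonneg_left _ (by positivity)
          exact hsum.trans hbd2
      _ = 3 * D / 2 * (K₁ + M₀ / (1 - s₀)) * T := by ring
  -- sum 3 : step sizes
  have hαsum : ∑ t ∈ Finset.range (tf+1), α t ≤ 1 + (tf:ℝ) ^ (1 - μ₁) / (1 - μ₁) := by
    rw [Finset.sum_range_succ', hα0]
    have : ∑ i ∈ Finset.range tf, α (i+1) =
        ∑ i ∈ Finset.range tf, ((i:ℝ) + 1) ^ (-μ₁) := by
      refine Finset.sum_congr rfl fun i _ => ?_
      rw [hα (i+1) (by omega)]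
      push_cast
      ring_nf
    rw [this]
    have := aux_sum_rpow hμ₁0.le hμ₁1 tf
    linarith
  have htfμ₁ : (tf:ℝ) ^ (1 - μ₁) ≤ T := by
    rw [hTdef]
    exact Real.rpow_le_rpow_of_exponent_le htf1
      (le_trans (le_max_left _ _) (le_max_right _ _))
  have hs3 : ∑ t ∈ Finset.range (tf+1), α t * (G ^ 2 / 2) ≤
      G ^ 2 / 2 * (1 + 1 / (1 - μ₁)) * T := by
    rw [← Finset.sum_mul]
    have h1μ₁ : (0:ℝ) < 1 - μ₁ := by linarith
    have hb : ∑ t ∈ Finset.range (tf+1), α t ≤ (1 + 1 / (1 - μ₁)) * T := by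
      have e2 : (tf:ℝ) ^ (1 - μ₁) / (1 - μ₁) ≤ T / (1 - μ₁) :=
        div_le_div_of_nonneg_right htfμ₁ h1μ₁.le
      have := hαsum
      have hTT : (1:ℝ) ≤ T := hT1
      calc ∑ t ∈ Finset.range (tf+1), α t ≤ 1 + (tf:ℝ) ^ (1 - μ₁) / (1 - μ₁) := hαsum
        _ ≤ T + T / (1 - μ₁) := by linarith
        _ = (1 + 1 / (1 - μ₁)) * T := by field_simp
    calc (∑ t ∈ Finset.range (tf+1), α t) * (G ^ 2 / 2)
        ≤ ((1 + 1 / (1 - μ₁)) * T) * (G ^ 2 / 2) :=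
          mul_le_mul_of_nonneg_right hb (by positivity)
      _ = G ^ 2 / 2 * (1 + 1 / (1 - μ₁)) * T := by ring
  -- assemble
  calc ∑ t ∈ Finset.range (tf+1), (J t (θ t) - J t (θstar t))
      ≤ ∑ t ∈ Finset.range (tf+1),
          c * (β t * (X t - X (t+1)) / 2 + 3 * D * (β t * d t) / 2 + α t * (G ^ 2 / 2)) :=
        Finset.sum_le_sum fun t _ => key t
    _ = c * (∑ t ∈ Finset.range (tf+1), β t * (X t - X (t+1)) / 2 +
          ∑ t ∈ Finset.range (tf+1), 3 * D * (β t * d t) / 2 +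
          ∑ t ∈ Finset.range (tf+1), α t * (G ^ 2 / 2)) := by
        rw [← Finset.mul_sum, ← Finset.sum_add_distrib, ← Finset.sum_add_distrib]
    _ ≤ c * (D ^ 2 / 2 * T + 3 * D / 2 * (K₁ + M₀ / (1 - s₀)) * T +
          G ^ 2 / 2 * (1 + 1 / (1 - μ₁)) * T) := by
        apply mul_le_mul_of_nonneg_left _ hcpos.le
        exact add_le_add (add_le_add hs1 hs2) hs3
    _ = (M - 1) * T := by rw [hMdef]; ring
    _ ≤ M * T := by nlinarith [hT0]
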